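/- arXiv:2511.18923 — 2 statements merged into one kernel-verified Lean document; each statement's English description precedes it below -/
import Mathlib

section
/- Let f : [0,T] → ℝ be differentiable with f'(t) ≤ -σ·|f(t)| for all t ∈ [0,T], where σ > 0. Then for all t ∈ [0,T], f(T)·e^{-σ(T-t)} ≤ f(t) ≤ f(0)·e^{-σ t}. -/
open Real Set

/-!
Since `-σ|f| ≤ ∓σ f`, both `f' ≤ -σ f` and `f' ≤ σ f` hold. With the integrating factors
`e^{σt}` and `e^{-σt}`, both `f e^{σt}` and `f e^{-σt}` are nonincreasing; comparing the first
at `0` and `t` gives the upper bound, the second at `t` and `T` the lower one.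
-/

theorem antitoneOn_mul_exp_of_deriv_le_mul {D : Set ℝ} (hD : Convex ℝ D) {f f' : ℝ → ℝ} {c : ℝ}
    (hf : ∀ x ∈ D, HasDerivAt f (f' x) x) (hle : ∀ x ∈ D, f' x ≤ c * f x) :
    AntitoneOn (fun t => f t * exp (-c * t)) D := by
  have hderiv : ∀ x ∈ D, HasDerivAt (fun t => f t * exp (-c * t))
      ((f' x - c * f x) * exp (-c * x)) x := by
    intro x hx
    have hexp : HasDerivAt (fun t => exp (-c * t)) (exp (-c * x) * -c) x := by
      simpa using ((hasDerivAt_id x).const_mul (-c)).exp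
    exact ((hf x hx).mul hexp).congr_deriv (by ring)
  refine antitoneOn_of_hasDerivWithinAt_nonpos hD
    (fun x hx => (hderiv x hx).continuousAt.continuousWithinAt)
    (fun x hx => (hderiv x (interior_subset hx)).hasDerivWithinAt) fun x hx => ?_
  exact mul_nonpos_of_nonpos_of_nonneg (sub_nonpos.2 (hle x (interior_subset hx))) (exp_pos _).le

theorem le_mul_exp_of_deriv_le_mul {D : Set ℝ} (hD : Convex ℝ D) {f f' : ℝ → ℝ} {c : ℝ}
    (hf : ∀ x ∈ D, HasDerivAt f (f' x) x) (hle : ∀ x ∈ D, f' x ≤ c * f x)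
    {s t : ℝ} (hs : s ∈ D) (ht : t ∈ D) (hst : s ≤ t) :
    f t ≤ f s * exp (c * (t - s)) := by
  have hanti := antitoneOn_mul_exp_of_deriv_le_mul hD hf hle hs ht hst
  calc f t = f t * exp (-c * t) * exp (c * t) := by rw [mul_assoc, ← exp_add]; simp
    _ ≤ f s * exp (-c * s) * exp (c * t) := by gcongr
    _ = f s * exp (c * (t - s)) := by rw [mul_assoc, ← exp_add]; ring_nf

theorem stmt_0_general (T σ : ℝ) (hσ : 0 < σ) (f f' : ℝ → ℝ)
    (hderiv : ∀ t ∈ Icc (0:ℝ) T, HasDerivAt f (f' t) t)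
    (hineq : ∀ t ∈ Icc (0:ℝ) T, f' t ≤ -σ * |f t|) :
    ∀ t ∈ Icc (0:ℝ) T,
      f T * Real.exp (-σ * (T - t)) ≤ f t ∧ f t ≤ f 0 * Real.exp (-σ * t) := by
  intro t ht
  have hT : T ∈ Icc (0:ℝ) T := ⟨ht.1.trans ht.2, le_rfl⟩
  have h0 : (0:ℝ) ∈ Icc (0:ℝ) T := ⟨le_rfl, ht.1.trans ht.2⟩
  have hgrowth : ∀ x ∈ Icc (0:ℝ) T, f' x ≤ σ * f x := fun x hx =>
    (hineq x hx).trans (by nlinarith [neg_abs_le (f x)])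
  have hdecay : ∀ x ∈ Icc (0:ℝ) T, f' x ≤ -σ * f x := fun x hx =>
    (hineq x hx).trans (by nlinarith [le_abs_self (f x)])
  constructor
  · have hfT := le_mul_exp_of_deriv_le_mul (convex_Icc 0 T) hderiv hgrowth ht hT ht.2
    calc f T * exp (-σ * (T - t)) ≤ f t * exp (σ * (T - t)) * exp (-σ * (T - t)) := by gcongr
      _ = f t := by rw [mul_assoc, ← exp_add]; simp
  · simpa using le_mul_exp_of_deriv_le_mul (convex_Icc 0 T) hderiv hdecay h0 ht ht.1

theorem stmt_0 (T σ : ℝ) (hT : 0 < T) (hσ : 0 < σ) (f f' : ℝ → ℝ)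
    (hderiv : ∀ t ∈ Icc (0:ℝ) T, HasDerivAt f (f' t) t)
    (hineq : ∀ t ∈ Icc (0:ℝ) T, f' t ≤ -σ * |f t|) :
    ∀ t ∈ Icc (0:ℝ) T,
      f T * Real.exp (-σ * (T - t)) ≤ f t ∧ f t ≤ f 0 * Real.exp (-σ * t) :=
  stmt_0_general T σ hσ f f' hderiv hineq
end

section
/- Let μ, v, m̄ be measurable with m̄ > 0, ∫ μ = 0, and define v̂ = v - ∫ m̄·v (with ∫ m̄ = 1). Then ∫ μ·v̂ = ∫ μ·v; moreover, using Young's inequality μ·v̂ ≥ -μ²/(2m̄) - m̄·v̂²/2 and the weighted Poincaré inequality ∫ m̄ v̂² ≤ C_P ∫ m̄|Dv|², one obtains ∫ μ·v + μ²/m̄ ≥ -(C_P/2) ∫ m̄|Dv|². -/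
/-!
Since `∫ μ = 0`, recentring `v` at its `m̄`-mean does not change `∫ μ v`. Pointwise, Young's
inequality gives `μ v̂ + μ² / m̄ ≥ -m̄ v̂² / 2`, and integrating and applying the weighted Poincaré
inequality to `∫ m̄ v̂²` yields the bound.
-/

open MeasureTheory

section

variable {α : Type*} [MeasurableSpace α] {ρ : Measure α}

/-- Holds even when `f` is not integrable, since then neither is `f + g`. -/
theorem integral_add_eq_of_integral_eq_zero (f : α → ℝ) {g : α → ℝ} (hg : Integrable g ρ)
    (hg0 : ∫ x, g x ∂ρ = 0) : ∫ x, f x + g x ∂ρ = ∫ x, f x ∂ρ := by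
  by_cases hf : Integrable f ρ
  · rw [integral_add hf hg, hg0, add_zero]
  · have hfg : ¬ Integrable (fun x => f x + g x) ρ := by
      refine fun h => hf ?_
      convert h.sub hg using 1
      ext x
      simp
    rw [integral_undef hf, integral_undef hfg]

theorem integral_mul_sub_const_of_integral_eq_zero {μ : α → ℝ} (hμ : Integrable μ ρ)
    (hμ0 : ∫ x, μ x ∂ρ = 0) (v : α → ℝ) (c : ℝ) :
    ∫ x, μ x * (v x - c) ∂ρ = ∫ x, μ x * v x ∂ρ := by
  have hcμ : ∫ x, c * μ x ∂ρ = 0 := by rw [integral_const_mul, hμ0, mul_zero]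
  rw [← integral_add_eq_of_integral_eq_zero (fun x => μ x * (v x - c)) (hμ.const_mul c) hcμ]
  congr 1 with x
  ring

end

/-- Young's inequality `a b ≥ -a² / (2m) - m b² / 2` combined with `a² / (2m) ≥ 0`. -/
theorem neg_mul_sq_div_two_le_mul_add_sq_div {m : ℝ} (hm : 0 < m) (a b : ℝ) :
    -(m * b ^ 2 / 2) ≤ a * b + a ^ 2 / m := by
  have key : a * b + a ^ 2 / m + m * b ^ 2 / 2 = (a + m * b / 2) ^ 2 / m + m * b ^ 2 / 4 := by
    field_simp
    ring
  have : 0 ≤ (a + m * b / 2) ^ 2 / m + m * b ^ 2 / 4 := by positivity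
  linarith

theorem stmt_16_general {Ω : Type*} [MeasureSpace Ω] (n : ℕ)
    (mbar μ v : Ω → ℝ) (Dv : Ω → EuclideanSpace ℝ (Fin n)) (CP : ℝ)
    (hm : ∀ x, 0 < mbar x)
    (hμ0 : (∫ x, μ x) = 0)
    (hIμ : Integrable μ) (hIμv : Integrable (fun x => μ x * v x))
    (hIμ2 : Integrable (fun x => μ x ^ 2 / mbar x))
    (hIv2 : Integrable (fun x => mbar x * (v x - ∫ y, mbar y * v y) ^ 2))
    (hPoin : (∫ x, mbar x * (v x - ∫ y, mbar y * v y) ^ 2)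
        ≤ CP * ∫ x, mbar x * ‖Dv x‖ ^ 2) :
    (∫ x, μ x * (v x - ∫ y, mbar y * v y)) = ∫ x, μ x * v x
    ∧ (∫ x, μ x * v x + μ x ^ 2 / mbar x)
        ≥ -(CP / 2) * ∫ x, mbar x * ‖Dv x‖ ^ 2 := by
  set c : ℝ := ∫ y, mbar y * v y
  have hshift := integral_mul_sub_const_of_integral_eq_zero hIμ hμ0 v c
  refine ⟨hshift, ?_⟩
  have hIμv' : Integrable (fun x => μ x * (v x - c)) := by
    convert hIμv.sub (hIμ.mul_const c) using 1
    ext x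
    simp [mul_sub]
  have hrecenter : ∫ x, μ x * v x + μ x ^ 2 / mbar x
      = ∫ x, μ x * (v x - c) + μ x ^ 2 / mbar x := by
    rw [integral_add hIμv hIμ2, integral_add hIμv' hIμ2, hshift]
  have hyoung : -((∫ x, mbar x * (v x - c) ^ 2) / 2)
      ≤ ∫ x, μ x * (v x - c) + μ x ^ 2 / mbar x := by
    rw [← integral_div, ← integral_neg]
    exact integral_mono (hIv2.div_const 2).neg (hIμv'.add hIμ2)
      fun x => neg_mul_sq_div_two_le_mul_add_sq_div (hm x) _ _
  rw [ge_iff_le, hrecenter]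
  linarith

theorem stmt_16 {Ω : Type*} [MeasureSpace Ω] (n : ℕ)
    (mbar μ v : Ω → ℝ) (Dv : Ω → EuclideanSpace ℝ (Fin n)) (CP : ℝ) (hCP : 0 < CP)
    (hm : ∀ x, 0 < mbar x)
    (hm1 : (∫ x, mbar x) = 1) (hμ0 : (∫ x, μ x) = 0)
    (hIμ : Integrable μ) (hIμv : Integrable (fun x => μ x * v x))
    (hIμ2 : Integrable (fun x => μ x ^ 2 / mbar x))
    (hIv2 : Integrable (fun x => mbar x * (v x - ∫ y, mbar y * v y) ^ 2))
    (hPoin : (∫ x, mbar x * (v x - ∫ y, mbar y * v y) ^ 2)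
        ≤ CP * ∫ x, mbar x * ‖Dv x‖ ^ 2) :
    (∫ x, μ x * (v x - ∫ y, mbar y * v y)) = ∫ x, μ x * v x
    ∧ (∫ x, μ x * v x + μ x ^ 2 / mbar x)
        ≥ -(CP / 2) * ∫ x, mbar x * ‖Dv x‖ ^ 2 :=
  stmt_16_general n mbar μ v Dv CP hm hμ0 hIμ hIμv hIμ2 hIv2 hPoin
end
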